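/- Let H be a 3-partite 3-uniform hypergraph with vertex parts V_A, V_B, V_C and hyperedge set E ⊆ V_A × V_B × V_C, and let x0, y0, z0 be fresh elements not in V_A ∪ V_B ∪ V_C. Consider the database instance with relations A = V_A ∪ {x0}, B = V_B ∪ {y0}, C = V_C ∪ {z0}, W = E ∪ {(x0,y0,z0)}, all tuples endogenous, and the Boolean query h1* ⟵ A(x), B(y), C(z), W(x,y,z). Then the minimum size of a contingency set for the tuple x0 ∈ A equals the minimum size of a vertex cover of H; hence the responsibility of x0 is 1/(1 + τ(H)), where τ(H) is the minimum vertex-cover size of H. -/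

import Mathlib

/-- An atom of a Boolean conjunctive query: a relation symbol applied to a
tuple (list) of variables, marked endogenous (`endo = true`) or exogenous. -/
structure DBAtom (Rel Var : Type) where
  rel : Rel
  args : List Var
  endo : Bool
deriving DecidableEq

/-- A database tuple: it belongs to one relation and carries a tuple of constants. -/
structure DBTup (Rel Const : Type) where
  rel : Rel
  args : List Const
deriving DecidableEq

/-- The tuple obtained by applying a valuation `θ` to an atom. -/
def DBAtom.app {Rel Var Const : Type} (g : DBAtom Rel Var) (θ : Var → Const) :
    DBTup Rel Const :=
  ⟨g.rel, g.args.map θ⟩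

/-- `dbSat D q` holds iff `D ⊨ q`: there is a valuation `θ` of the variables of `q`
into the domain with `θ(g) ∈ D` for every atom `g` of `q`. -/
def dbSat {Rel Var Const : Type} (D : Finset (DBTup Rel Const))
    (q : Finset (DBAtom Rel Var)) : Prop :=
  ∃ θ : Var → Const, ∀ g ∈ q, g.app θ ∈ D

/-- `t` is an actual cause for `q` in `D` (with endogenous tuples `Dn`):
there is a contingency set `Γ ⊆ Dn` with `t ∉ Γ` such that
`D − Γ ⊨ q` and `D − Γ − {t} ⊭ q`. -/
def isActualCause {Rel Var Const : Type} [DecidableEq Rel] [DecidableEq Const]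
    (q : Finset (DBAtom Rel Var)) (D Dn : Finset (DBTup Rel Const))
    (t : DBTup Rel Const) : Prop :=
  ∃ Γ : Finset (DBTup Rel Const), Γ ⊆ Dn ∧ t ∉ Γ ∧
    dbSat (D \ Γ) q ∧ ¬ dbSat ((D \ Γ).erase t) q

/-- The n-lineage of `q` on `D`: the family of the sets `c^θ ∩ Dⁿ`
over all valuations `θ` with `θ(g) ∈ D` for all atoms `g` of `q`, where
`c^θ = {θ(g) : g an atom of q}`. -/
def nLineage {Rel Var Const : Type} [DecidableEq Rel] [DecidableEq Const]
    (q : Finset (DBAtom Rel Var)) (D Dn : Finset (DBTup Rel Const)) :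
    Set (Finset (DBTup Rel Const)) :=
  {c | ∃ θ : Var → Const, (∀ g ∈ q, g.app θ ∈ D) ∧
    c = (q.image fun g => g.app θ) ∩ Dn}

/-!
Removing the tuples of a vertex cover `S` of `H` keeps the witness `(x0, y0, z0)` but destroys
every other one, since every other witness runs through a hyperedge; so `S` yields a contingency
set for `x0` of size `|S|`. Conversely, sending each tuple of a contingency set `Γ` to its first
argument gives a set of at most `|Γ|` vertices that must meet every hyperedge, for otherwise the
hyperedge would survive as a witness after `x0` is removed.
-/

namespace HypergraphResponsibility

variable {V : Type}

/-- The query `h1* ⟵ A(x), B(y), C(z), W(x,y,z)`, with `A, B, C, W` numbered `0, 1, 2, 3`. -/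
def query : Finset (DBAtom (Fin 4) (Fin 3)) :=
  {⟨0, [0], true⟩, ⟨1, [1], true⟩, ⟨2, [2], true⟩, ⟨3, [0, 1, 2], true⟩}

theorem dbSat_query_iff (D : Finset (DBTup (Fin 4) V)) :
    dbSat D query ↔ ∃ a b c : V, (⟨0, [a]⟩ : DBTup (Fin 4) V) ∈ D ∧ ⟨1, [b]⟩ ∈ D ∧
      ⟨2, [c]⟩ ∈ D ∧ ⟨3, [a, b, c]⟩ ∈ D := by
  constructor
  · rintro ⟨θ, hθ⟩
    exact ⟨θ 0, θ 1, θ 2, hθ ⟨0, [0], true⟩ (by simp [query]),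
      hθ ⟨1, [1], true⟩ (by simp [query]), hθ ⟨2, [2], true⟩ (by simp [query]),
      hθ ⟨3, [0, 1, 2], true⟩ (by simp [query])⟩
  · rintro ⟨a, b, c, ha, hb, hc, hw⟩
    refine ⟨![a, b, c], fun g hg => ?_⟩
    simp only [query, Finset.mem_insert, Finset.mem_singleton] at hg
    rcases hg with rfl | rfl | rfl | rfl <;> simpa [DBAtom.app]

variable [DecidableEq V]

def tripleDB (A B C : Finset V) (W : Finset (V × V × V)) : Finset (DBTup (Fin 4) V) :=
  A.image (fun a => ⟨0, [a]⟩) ∪ B.image (fun b => ⟨1, [b]⟩) ∪ C.image (fun c => ⟨2, [c]⟩) ∪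
    W.image (fun e => ⟨3, [e.1, e.2.1, e.2.2]⟩)

/-- Contingency sets for `t` when every tuple of `D` is endogenous. -/
def IsContingencySet {Rel Var : Type} [DecidableEq Rel] (q : Finset (DBAtom Rel Var))
    (D : Finset (DBTup Rel V)) (t : DBTup Rel V) (Γ : Finset (DBTup Rel V)) : Prop :=
  Γ ⊆ D ∧ t ∉ Γ ∧ dbSat (D \ Γ) q ∧ ¬ dbSat ((D \ Γ).erase t) q

section tripleDB

variable (A B C : Finset V) (W : Finset (V × V × V))

@[simp]
theorem mk_zero_mem_tripleDB (a : V) :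
    (⟨0, [a]⟩ : DBTup (Fin 4) V) ∈ tripleDB A B C W ↔ a ∈ A := by
  simp [tripleDB]

@[simp]
theorem mk_one_mem_tripleDB (b : V) :
    (⟨1, [b]⟩ : DBTup (Fin 4) V) ∈ tripleDB A B C W ↔ b ∈ B := by
  simp [tripleDB]

@[simp]
theorem mk_two_mem_tripleDB (c : V) :
    (⟨2, [c]⟩ : DBTup (Fin 4) V) ∈ tripleDB A B C W ↔ c ∈ C := by
  simp [tripleDB]

@[simp]
theorem mk_three_mem_tripleDB (a b c : V) :
    (⟨3, [a, b, c]⟩ : DBTup (Fin 4) V) ∈ tripleDB A B C W ↔ (a, b, c) ∈ W := by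
  simp [tripleDB]

end tripleDB

def vertexTuple (VA VB : Finset V) (v : V) : DBTup (Fin 4) V :=
  if v ∈ VA then ⟨0, [v]⟩ else if v ∈ VB then ⟨1, [v]⟩ else ⟨2, [v]⟩

section vertexTuple

variable {VA VB VC : Finset V} {v : V}

theorem vertexTuple_of_mem_left (hv : v ∈ VA) : vertexTuple VA VB v = ⟨0, [v]⟩ := by
  simp [vertexTuple, hv]

theorem vertexTuple_of_mem_middle (hAB : Disjoint VA VB) (hv : v ∈ VB) :
    vertexTuple VA VB v = ⟨1, [v]⟩ := by
  simp [vertexTuple, hv, Finset.disjoint_right.1 hAB hv]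

theorem vertexTuple_of_mem_right (hAC : Disjoint VA VC) (hBC : Disjoint VB VC) (hv : v ∈ VC) :
    vertexTuple VA VB v = ⟨2, [v]⟩ := by
  simp [vertexTuple, Finset.disjoint_right.1 hAC hv, Finset.disjoint_right.1 hBC hv]

theorem vertexTuple_args (VA VB : Finset V) (v : V) : (vertexTuple VA VB v).args = [v] := by
  unfold vertexTuple; split_ifs <;> rfl

theorem vertexTuple_rel_ne_three (VA VB : Finset V) (v : V) : (vertexTuple VA VB v).rel ≠ 3 := by
  unfold vertexTuple; split_ifs <;> simp

theorem vertexTuple_injective (VA VB : Finset V) : Function.Injective (vertexTuple VA VB) :=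
  fun u v h => List.singleton_inj.1 <| by
    rw [← vertexTuple_args VA VB u, ← vertexTuple_args VA VB v, h]

theorem mem_of_mk_mem_image_vertexTuple {S : Finset V} {r : Fin 4}
    (h : (⟨r, [v]⟩ : DBTup (Fin 4) V) ∈ S.image (vertexTuple VA VB)) : v ∈ S := by
  obtain ⟨u, hu, huv⟩ := Finset.mem_image.1 h
  have := congrArg DBTup.args huv
  rw [vertexTuple_args, List.singleton_inj] at this
  exact this ▸ hu

end vertexTuple

variable {VA VB VC : Finset V} {E : Finset (V × V × V)} {x0 y0 z0 : V}

theorem isContingencySet_image_vertexTuple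
    (hAB : Disjoint VA VB) (hAC : Disjoint VA VC) (hBC : Disjoint VB VC)
    (hE : ∀ e ∈ E, e.1 ∈ VA ∧ e.2.1 ∈ VB ∧ e.2.2 ∈ VC)
    (hx0 : x0 ∉ VA ∪ VB ∪ VC) (hy0 : y0 ∉ VA ∪ VB ∪ VC) (hz0 : z0 ∉ VA ∪ VB ∪ VC)
    {S : Finset V} (hS : S ⊆ VA ∪ VB ∪ VC) (hcover : ∀ e ∈ E, e.1 ∈ S ∨ e.2.1 ∈ S ∨ e.2.2 ∈ S) :
    IsContingencySet query
      (tripleDB (insert x0 VA) (insert y0 VB) (insert z0 VC) (insert (x0, y0, z0) E))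
      ⟨0, [x0]⟩ (S.image (vertexTuple VA VB)) := by
  have hΓ : ∀ {r : Fin 4} {v : V}, v ∉ VA ∪ VB ∪ VC →
      (⟨r, [v]⟩ : DBTup (Fin 4) V) ∉ S.image (vertexTuple VA VB) :=
    fun hv h => hv (hS (mem_of_mk_mem_image_vertexTuple h))
  have hW : ∀ a b c : V, (⟨3, [a, b, c]⟩ : DBTup (Fin 4) V) ∉ S.image (vertexTuple VA VB) :=
    fun a b c h => by
      obtain ⟨v, -, hv⟩ := Finset.mem_image.1 h
      exact vertexTuple_rel_ne_three VA VB v (congrArg DBTup.rel hv)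
  refine ⟨?_, hΓ hx0, ?_, ?_⟩
  · intro t ht
    obtain ⟨v, hv, rfl⟩ := Finset.mem_image.1 ht
    rcases Finset.mem_union.1 (hS hv) with hv' | hvC
    · rcases Finset.mem_union.1 hv' with hvA | hvB
      · simp [vertexTuple_of_mem_left hvA, hvA]
      · simp [vertexTuple_of_mem_middle hAB hvB, hvB]
    · simp [vertexTuple_of_mem_right hAC hBC hvC, hvC]
  · exact (dbSat_query_iff _).2 ⟨x0, y0, z0, by simp [hΓ hx0], by simp [hΓ hy0],
      by simp [hΓ hz0], by simp [hW]⟩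
  · rw [dbSat_query_iff]
    rintro ⟨a, b, c, ha, hb, hc, hw⟩
    simp only [Finset.mem_erase, Finset.mem_sdiff, ne_eq, mk_zero_mem_tripleDB,
      mk_one_mem_tripleDB, mk_two_mem_tripleDB, mk_three_mem_tripleDB] at ha hb hc hw
    rcases Finset.mem_insert.1 hw.2.1 with habc | he
    · exact ha.1 (by rw [(Prod.mk.inj habc).1])
    · obtain ⟨haA, hbB, hcC⟩ := hE _ he
      rcases hcover _ he with haS | hbS | hcS
      · exact ha.2.2 (Finset.mem_image.2 ⟨a, haS, vertexTuple_of_mem_left haA⟩)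
      · exact hb.2.2 (Finset.mem_image.2 ⟨b, hbS, vertexTuple_of_mem_middle hAB hbB⟩)
      · exact hc.2.2 (Finset.mem_image.2 ⟨c, hcS, vertexTuple_of_mem_right hAC hBC hcC⟩)

theorem exists_cover_of_isContingencySet
    (hE : ∀ e ∈ E, e.1 ∈ VA ∧ e.2.1 ∈ VB ∧ e.2.2 ∈ VC) (hx0 : x0 ∉ VA ∪ VB ∪ VC)
    {Γ : Finset (DBTup (Fin 4) V)}
    (hΓ : IsContingencySet query
      (tripleDB (insert x0 VA) (insert y0 VB) (insert z0 VC) (insert (x0, y0, z0) E))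
      ⟨0, [x0]⟩ Γ) :
    ∃ S : Finset V, S ⊆ VA ∪ VB ∪ VC ∧ (∀ e ∈ E, e.1 ∈ S ∨ e.2.1 ∈ S ∨ e.2.2 ∈ S) ∧
      S.card ≤ Γ.card := by
  obtain ⟨-, -, -, hunsat⟩ := hΓ
  set firstArgs := Γ.image fun t => t.args.headD x0
  refine ⟨(VA ∪ VB ∪ VC) ∩ firstArgs, Finset.inter_subset_left, fun e he => ?_,
    (Finset.card_le_card Finset.inter_subset_right).trans Finset.card_image_le⟩
  obtain ⟨haA, hbB, hcC⟩ := hE e he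
  have hmem : ∀ {v : V} {r : Fin 4} {l : List V}, v ∈ VA ∪ VB ∪ VC → ⟨r, v :: l⟩ ∈ Γ →
      v ∈ (VA ∪ VB ∪ VC) ∩ firstArgs :=
    fun hv ht => Finset.mem_inter.2 ⟨hv, Finset.mem_image.2 ⟨_, ht, rfl⟩⟩
  by_contra! hnot
  obtain ⟨ha, hb, hc⟩ := hnot
  have hxa : e.1 ≠ x0 := fun h => hx0 (h ▸ by simp [haA])
  refine hunsat ((dbSat_query_iff _).2 ⟨e.1, e.2.1, e.2.2, ?_, ?_, ?_, ?_⟩) <;>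
    simp only [Finset.mem_erase, Finset.mem_sdiff, ne_eq, DBTup.mk.injEq, List.cons.injEq,
      mk_zero_mem_tripleDB, mk_one_mem_tripleDB, mk_two_mem_tripleDB, mk_three_mem_tripleDB,
      Finset.mem_insert, haA, hbB, hcC, he, hxa, or_true, and_true, true_and, Fin.reduceEq,
      false_and, not_false_eq_true]
  · exact fun h => ha (hmem (by simp [haA]) h)
  · exact fun h => hb (hmem (by simp [hbB]) h)
  · exact fun h => hc (hmem (by simp [hcC]) h)
  · exact fun h => ha (hmem (by simp [haA]) h)

end HypergraphResponsibility

theorem Nat.sInf_eq_of_subset_of_forall_exists_le {s t : Set ℕ} (hst : s ⊆ t) (hs : s.Nonempty)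
    (hts : ∀ n ∈ t, ∃ m ∈ s, m ≤ n) : sInf t = sInf s := by
  refine le_antisymm (Nat.sInf_le (hst (Nat.sInf_mem hs))) ?_
  obtain ⟨m, hm, hmn⟩ := hts _ (Nat.sInf_mem (hs.mono hst))
  exact (Nat.sInf_le hm).trans hmn

open HypergraphResponsibility in
/-- Let `H` be a 3-partite 3-uniform hypergraph with vertex parts
`V_A, V_B, V_C` and hyperedge set `E ⊆ V_A × V_B × V_C`, and let `x0, y0, z0` be fresh
elements not in `V_A ∪ V_B ∪ V_C`. For the database instance with relations
`A = V_A ∪ {x0}`, `B = V_B ∪ {y0}`, `C = V_C ∪ {z0}`, `W = E ∪ {(x0,y0,z0)}`, all tuples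
endogenous, and the Boolean query `h1* ⟵ A(x), B(y), C(z), W(x,y,z)` (relation symbols
`A,B,C,W` are `0,1,2,3`; variables `x,y,z` are `0,1,2`), the minimum size of a
contingency set for the tuple `x0 ∈ A` equals the minimum size `τ(H)` of a vertex cover
of `H`; hence the responsibility of `x0` is `1/(1 + τ(H))`. -/
theorem statement11 {V : Type} [DecidableEq V]
    (VA VB VC : Finset V) (E : Finset (V × V × V))
    (hAB : Disjoint VA VB) (hAC : Disjoint VA VC) (hBC : Disjoint VB VC)
    (hE : ∀ e ∈ E, e.1 ∈ VA ∧ e.2.1 ∈ VB ∧ e.2.2 ∈ VC)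
    (x0 y0 z0 : V)
    (hx0 : x0 ∉ VA ∪ VB ∪ VC) (hy0 : y0 ∉ VA ∪ VB ∪ VC) (hz0 : z0 ∉ VA ∪ VB ∪ VC) :
    let q : Finset (DBAtom (Fin 4) (Fin 3)) :=
      {⟨0, [0], true⟩, ⟨1, [1], true⟩, ⟨2, [2], true⟩, ⟨3, [0, 1, 2], true⟩}
    let D : Finset (DBTup (Fin 4) V) :=
      (insert x0 VA).image (fun a => ⟨0, [a]⟩) ∪
      (insert y0 VB).image (fun b => ⟨1, [b]⟩) ∪
      (insert z0 VC).image (fun c => ⟨2, [c]⟩) ∪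
      (insert (x0, y0, z0) E).image (fun e => ⟨3, [e.1, e.2.1, e.2.2]⟩)
    let t0 : DBTup (Fin 4) V := ⟨0, [x0]⟩
    let contSizes : Set ℕ :=
      {n | ∃ Γ : Finset (DBTup (Fin 4) V), Γ ⊆ D ∧ t0 ∉ Γ ∧
        dbSat (D \ Γ) q ∧ ¬ dbSat ((D \ Γ).erase t0) q ∧ Γ.card = n}
    let coverSizes : Set ℕ :=
      {n | ∃ S : Finset V, S ⊆ VA ∪ VB ∪ VC ∧
        (∀ e ∈ E, e.1 ∈ S ∨ e.2.1 ∈ S ∨ e.2.2 ∈ S) ∧ S.card = n}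
    sInf contSizes = sInf coverSizes ∧
      (1 : ℝ) / (1 + ((sInf contSizes : ℕ) : ℝ)) = 1 / (1 + ((sInf coverSizes : ℕ) : ℝ)) := by
  intro q D t0 contSizes coverSizes
  have hcover : coverSizes ⊆ contSizes := by
    rintro n ⟨S, hS, hcov, rfl⟩
    obtain ⟨hsub, ht0, hsat, hunsat⟩ :=
      isContingencySet_image_vertexTuple hAB hAC hBC hE hx0 hy0 hz0 hS hcov
    exact ⟨_, hsub, ht0, hsat, hunsat,
      Finset.card_image_of_injective S (vertexTuple_injective VA VB)⟩
  have hcont : ∀ n ∈ contSizes, ∃ m ∈ coverSizes, m ≤ n := by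
    rintro n ⟨Γ, hsub, ht0, hsat, hunsat, rfl⟩
    obtain ⟨S, hS, hcov, hcard⟩ :=
      exists_cover_of_isContingencySet hE hx0 ⟨hsub, ht0, hsat, hunsat⟩
    exact ⟨S.card, ⟨S, hS, hcov, rfl⟩, hcard⟩
  have hne : coverSizes.Nonempty :=
    ⟨_, VA ∪ VB ∪ VC, subset_rfl, fun e he => Or.inl (by simp [(hE e he).1]), rfl⟩
  have h := Nat.sInf_eq_of_subset_of_forall_exists_le hcover hne hcont
  exact ⟨h, by rw [h]⟩
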